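/- arXiv:2203.14567 — 5 statements merged into one kernel-verified Lean document; each statement's English description precedes it below -/
import Mathlib

section
/- Define the rating sequence r : ℕ → ℝ by r(0) = 0 and r(t+1) = r(t) + σ(-2 r(t)), where σ(z) = 1/(1+e^{-z}). Then r is strictly increasing and r(t) → ∞ as t → ∞. -/
theorem rating_strictMono_tendsto_atTop (σ : ℝ → ℝ)
    (hσ : ∀ z, σ z = 1 / (1 + Real.exp (-z)))
    (r : ℕ → ℝ) (hr0 : r 0 = 0) (hrec : ∀ t, r (t + 1) = r t + σ (-2 * r t)) :
    StrictMono r ∧ Filter.Tendsto r Filter.atTop Filter.atTop := by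
  have hσpos : ∀ z, 0 < σ z := by
    intro z
    rw [hσ]
    positivity
  have hmono : StrictMono r := by
    apply strictMono_nat_of_lt_succ
    intro t
    rw [hrec]
    linarith [hσpos (-2 * r t)]
  refine ⟨hmono, ?_⟩
  -- key: exp (2 * r t) ≥ t + 1
  have hkey : ∀ t : ℕ, 0 ≤ r t ∧ (t : ℝ) + 1 ≤ Real.exp (2 * r t) := by
    intro t
    induction t with
    | zero => simp [hr0]
    | succ n ih =>
      obtain ⟨hge0, hexp⟩ := ih
      have hu : (1:ℝ) ≤ Real.exp (2 * r n) := by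
        calc (1:ℝ) = Real.exp 0 := by simp
        _ ≤ Real.exp (2 * r n) := Real.exp_le_exp.mpr (by linarith)
      set u := Real.exp (2 * r n) with hu_def
      have hσval : σ (-2 * r n) = 1 / (1 + u) := by
        rw [hσ]
        congr 1
        rw [hu_def, neg_mul, neg_neg]
      constructor
      · have := hσpos (-2 * r n)
        rw [hrec]; linarith
      · rw [hrec, hσval, mul_add, Real.exp_add]
        have h1 : (1:ℝ) + 2 / (1 + u) ≤ Real.exp (2 * (1 / (1 + u))) := by
          have := Real.add_one_le_exp (2 * (1 / (1 + u)))
          have : 2 * (1 / (1 + u)) = 2 / (1 + u) := by ring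
          linarith [Real.add_one_le_exp (2 * (1 / (1 + u))), this]
        have hupos : (0:ℝ) < 1 + u := by linarith
        have h2 : u + 1 ≤ u * (1 + 2 / (1 + u)) := by
          have : u * (1 + 2 / (1 + u)) = u + 2 * u / (1 + u) := by
            field_simp
          rw [this]
          have : (1:ℝ) ≤ 2 * u / (1 + u) := by
            rw [le_div_iff₀ hupos]
            linarith
          linarith
        push_cast
        calc (n : ℝ) + 1 + 1 ≤ u + 1 := by linarith
        _ ≤ u * (1 + 2 / (1 + u)) := h2
        _ ≤ u * Real.exp (2 * (1 / (1 + u))) := by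
            apply mul_le_mul_of_nonneg_left h1 (by linarith)
  -- lower bound: r t ≥ log (t+1) / 2
  have hbound : ∀ t : ℕ, Real.log (t + 1) / 2 ≤ r t := by
    intro t
    obtain ⟨_, hexp⟩ := hkey t
    have hpos : (0:ℝ) < (t:ℝ) + 1 := by positivity
    have := (Real.log_le_iff_le_exp hpos).mpr hexp
    linarith
  have htend : Filter.Tendsto (fun t : ℕ => Real.log (t + 1) / 2) Filter.atTop Filter.atTop := by
    apply Filter.Tendsto.atTop_div_const (by norm_num : (0:ℝ) < 2)
    exact Real.tendsto_log_atTop.comp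
      (Filter.tendsto_atTop_add_const_right _ 1 tendsto_natCast_atTop_atTop)
  exact Filter.tendsto_atTop_mono hbound htend
end

section
/- Let σ(z) = 1/(1+e^{-z}) and define r : ℕ → ℝ by r(0)=0, r(t+1)=r(t)+σ(-2r(t)), and f(x)=∫₀ˣ dτ/σ(-τ). Then for all k ≥ 1, |r(k) - (1/2) f^{-1}(2k)| ≤ 3, where f^{-1} denotes the inverse function of f on [0,∞). -/
theorem rating_asymptotics_logistic (σ : ℝ → ℝ)
    (hσ : ∀ z, σ z = 1 / (1 + Real.exp (-z)))
    (r : ℕ → ℝ) (hr0 : r 0 = 0) (hrec : ∀ t, r (t + 1) = r t + σ (-2 * r t))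
    (f : ℝ → ℝ) (hf : ∀ x, f x = ∫ τ in (0:ℝ)..x, 1 / σ (-τ))
    (finv : ℝ → ℝ)
    (hfinv_left : ∀ x : ℝ, 0 ≤ x → finv (f x) = x)
    (hfinv_nonneg : ∀ x : ℝ, 0 ≤ x → 0 ≤ finv x)
    (hfinv_right : ∀ x : ℝ, 0 ≤ x → f (finv x) = x) :
    ∀ k : ℕ, 1 ≤ k → |r k - (1 / 2) * finv (2 * k)| ≤ 3 := by
  set E := Real.exp 1 with hEdef
  have hE2 : (2:ℝ) < E := by
    have := Real.exp_one_gt_d9; linarith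
  -- explicit formula for f
  have hexp : ∀ x : ℝ, f x = x + Real.exp x - 1 := by
    intro x
    rw [hf]
    have heq : ∀ τ : ℝ, 1 / σ (-τ) = 1 + Real.exp τ := by
      intro τ
      rw [hσ, neg_neg]
      have h1 : (0:ℝ) < 1 + Real.exp τ := by positivity
      field_simp
    simp only [heq]
    rw [intervalIntegral.integral_add intervalIntegrable_const
      (Real.continuous_exp.intervalIntegrable 0 x)]
    simp [integral_exp]
    ring
  -- r is nonnegative
  have hσpos : ∀ z : ℝ, 0 < σ z := by
    intro z; rw [hσ]; positivity
  have hrnn : ∀ t, 0 ≤ r t := by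
    intro t
    induction t with
    | zero => rw [hr0]
    | succ n ih => rw [hrec]; have := hσpos (-2 * r n); linarith
  -- step bounds on f (2 * r t)
  have hstep : ∀ t, 2 ≤ f (2 * r (t + 1)) - f (2 * r t) ∧
      f (2 * r (t + 1)) - f (2 * r t) ≤ 2 * E := by
    intro t
    set u := Real.exp (2 * r t) with hu
    have hu1 : 1 ≤ u := by
      rw [hu]; have : (0:ℝ) ≤ 2 * r t := by have := hrnn t; linarith
      calc (1:ℝ) = Real.exp 0 := by simp
        _ ≤ Real.exp (2 * r t) := Real.exp_le_exp.2 this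
    set s := σ (-2 * r t) with hs
    have hsval : s = 1 / (1 + u) := by
      have harg : -(-2 * r t) = 2 * r t := by ring
      rw [hs, hσ, harg, hu]
    have hspos : 0 < s := hσpos _
    have hsle : s * (1 + u) = 1 := by
      rw [hsval]; field_simp
    have hshalf : s ≤ 1 / 2 := by
      rw [hsval]
      rw [div_le_div_iff₀ (by linarith) (by norm_num)]
      linarith
    have hnext : f (2 * r (t + 1)) = 2 * r t + 2 * s + u * Real.exp (2 * s) - 1 := by
      rw [hrec t, hexp]
      have : 2 * (r t + s) = 2 * r t + 2 * s := by ring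
      rw [this, Real.exp_add, ← hu]
    have hcur : f (2 * r t) = 2 * r t + u - 1 := by rw [hexp, ← hu]
    have hdiff : f (2 * r (t + 1)) - f (2 * r t) = 2 * s + u * (Real.exp (2 * s) - 1) := by
      rw [hnext, hcur]; ring
    have hlb : 2 * s + 1 ≤ Real.exp (2 * s) := Real.add_one_le_exp (2 * s)
    constructor
    · rw [hdiff]
      nlinarith [hlb, hu1, hsle, hspos]
    · rw [hdiff]
      -- exp(2s) ≤ E since 2s ≤ 1
      have h2sE : Real.exp (2 * s) ≤ E := by
        rw [hEdef]; exact Real.exp_le_exp.2 (by linarith)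
      -- exp(2s) - 1 ≤ 2s * exp(2s)
      have hub : Real.exp (2 * s) - 1 ≤ 2 * s * Real.exp (2 * s) := by
        have h := Real.add_one_le_exp (-(2 * s))
        rw [Real.exp_neg] at h
        have hp : 0 < Real.exp (2 * s) := Real.exp_pos _
        have := mul_le_mul_of_nonneg_right h hp.le
        rw [inv_mul_cancel₀ hp.ne'] at this
        nlinarith
      have hEpos : (0:ℝ) < E := by linarith
      nlinarith [hub, h2sE, hu1, hsle, hspos, Real.exp_pos (2 * s)]
  -- cumulative bounds
  have hbounds : ∀ k : ℕ, 2 * (k:ℝ) ≤ f (2 * r k) ∧ f (2 * r k) ≤ 2 * E * k := by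
    intro k
    induction k with
    | zero => simp [hr0, hexp]
    | succ n ih =>
      obtain ⟨h1, h2⟩ := hstep n
      push_cast
      constructor
      · linarith [ih.1]
      · nlinarith [ih.2, hE2]
  -- f is strictly monotone
  have hmono : StrictMono f := by
    intro a b hab
    rw [hexp, hexp]
    have := Real.exp_lt_exp.2 hab
    linarith
  -- growth: E * f x ≤ f (x + 2) for x ≥ 0
  have hgrow : ∀ x : ℝ, 0 ≤ x → E * f x ≤ f (x + 2) := by
    intro x hx
    rw [hexp, hexp]
    have hxe : Real.exp (x + 2) = Real.exp x * E * E := by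
      rw [hEdef, ← Real.exp_add, ← Real.exp_add]; ring_nf
    rw [hxe]
    have h1 : x + 1 ≤ Real.exp x := Real.add_one_le_exp x
    have hEE : (0:ℝ) ≤ E * (E - 1) := by nlinarith
    nlinarith [mul_le_mul_of_nonneg_left h1 hEE, mul_nonneg hx (sq_nonneg (E - 1)), hE2]
  intro k hk
  have hk2 : (0:ℝ) ≤ 2 * (k:ℕ) := by positivity
  have hfinvnn : 0 ≤ finv (2 * k) := hfinv_nonneg _ hk2
  have hfval : f (finv (2 * k)) = 2 * k := hfinv_right _ hk2
  obtain ⟨hlo, hhi⟩ := hbounds k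
  -- lower: finv (2k) ≤ 2 * r k
  have h1 : finv (2 * (k:ℝ)) ≤ 2 * r k := by
    by_contra h
    push_neg at h
    have := hmono h
    rw [hfval] at this
    linarith
  -- upper: 2 * r k ≤ finv (2k) + 2
  have h2 : 2 * r k ≤ finv (2 * (k:ℝ)) + 2 := by
    by_contra h
    push_neg at h
    have hg := hgrow (finv (2 * k)) hfinvnn
    rw [hfval] at hg
    have := hmono h
    have hk1 : (1:ℝ) ≤ k := by exact_mod_cast hk
    nlinarith
  rw [abs_le]
  constructor <;> linarith
end

section
/- Let σ(z) = 1/(1+e^{-z}) and define r : ℕ → ℝ by r(0)=0, r(t+1)=r(t)+σ(-2r(t)). Then there is a constant C such that for all k ≥ 1, |r(k) - (1/2) log k| ≤ C. -/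
/-!
With `φ x = x + σ (-2x) = x + (1 + e^{2x})⁻¹` the sequence is the orbit `r t = φ^[t] 0`.
The map `φ` is increasing (its derivative is `1 - 2e^{2x}/(1 + e^{2x})² ≥ 0`), and at
`x = (log y)/2` it adds exactly `1/(1 + y)`. Since `log y - log x` lies between `(y - x)/y` and
`(y - x)/x`, the sequences `log (t + 1)/2` and `log (4t + 2)/2` are a sub- and a super-solution
of the recurrence, and monotonicity of `φ` traps the orbit between them.
-/

open Real

noncomputable def ratingStep (x : ℝ) : ℝ := x + (1 + exp (2 * x))⁻¹

lemma hasDerivAt_ratingStep (x : ℝ) :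
    HasDerivAt ratingStep (1 - exp (2 * x) * 2 / (1 + exp (2 * x)) ^ 2) x := by
  have hden : HasDerivAt (fun x => 1 + exp (2 * x)) (exp (2 * x) * 2) x := by
    simpa using (((hasDerivAt_id x).const_mul 2).exp.const_add 1)
  exact ((hasDerivAt_id x).add (hden.inv (by positivity))).congr_deriv (by ring)

lemma monotone_ratingStep : Monotone ratingStep := by
  refine monotone_of_deriv_nonneg (fun x => (hasDerivAt_ratingStep x).differentiableAt)
    fun x => ?_
  rw [(hasDerivAt_ratingStep x).deriv, sub_nonneg, div_le_one (by positivity)]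
  nlinarith [exp_pos (2 * x)]

lemma ratingStep_half_log {y : ℝ} (hy : 0 < y) :
    ratingStep (log y / 2) = log y / 2 + (1 + y)⁻¹ := by
  rw [ratingStep, mul_div_cancel₀ _ two_ne_zero, exp_log hy]

lemma log_sub_log_le_div {x y : ℝ} (hx : 0 < x) (hy : 0 < y) :
    log y - log x ≤ (y - x) / x := by
  rw [← log_div hy.ne' hx.ne', sub_div, div_self hx.ne']
  exact log_le_sub_one_of_pos (div_pos hy hx)

lemma div_le_log_sub_log {x y : ℝ} (hx : 0 < x) (hy : 0 < y) :
    (y - x) / y ≤ log y - log x := by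
  rw [← log_div hy.ne' hx.ne', sub_div, div_self hy.ne']
  simpa [inv_div] using one_sub_inv_le_log_of_pos (div_pos hy hx)

lemma half_log_add_two_le_ratingStep {x : ℝ} (hx : 0 ≤ x) :
    log (x + 2) / 2 ≤ ratingStep (log (x + 1) / 2) := by
  rw [ratingStep_half_log (by positivity)]
  have hlog := log_sub_log_le_div (x := x + 1) (y := x + 2) (by positivity) (by positivity)
  have hfrac : (x + 2 - (x + 1)) / (x + 1) ≤ 2 * (1 + (x + 1))⁻¹ := by
    rw [← div_eq_mul_inv, div_le_div_iff₀ (by positivity) (by positivity)]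
    linarith
  linarith

lemma ratingStep_half_log_le {x : ℝ} (hx : 0 ≤ x) :
    ratingStep (log (4 * x + 2) / 2) ≤ log (4 * x + 6) / 2 := by
  rw [ratingStep_half_log (by positivity)]
  have hlog := div_le_log_sub_log (x := 4 * x + 2) (y := 4 * x + 6) (by positivity)
    (by positivity)
  have hfrac : 2 * (1 + (4 * x + 2))⁻¹ ≤ (4 * x + 6 - (4 * x + 2)) / (4 * x + 6) := by
    rw [← div_eq_mul_inv, div_le_div_iff₀ (by positivity) (by positivity)]
    linarith
  linarith

theorem ratingStep_iterate_zero_mem_Icc (t : ℕ) :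
    ratingStep^[t] 0 ∈ Set.Icc (log (t + 1) / 2) (log (4 * t + 2) / 2) := by
  have hiter : ∀ k, ratingStep^[k + 1] 0 = ratingStep (ratingStep^[k] 0) := fun k =>
    Function.iterate_succ_apply' ..
  constructor
  · refine monotone_ratingStep.seq_le_seq (x := fun t : ℕ => log (t + 1) / 2)
      (y := fun t => ratingStep^[t] 0) t
      (by simp) (fun k _ => ?_) (fun k _ => (hiter k).ge)
    have hcast : ((k + 1 : ℕ) : ℝ) + 1 = k + 2 := by push_cast; ring
    simpa only [hcast] using half_log_add_two_le_ratingStep k.cast_nonneg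
  · refine monotone_ratingStep.seq_le_seq (x := fun t => ratingStep^[t] 0)
      (y := fun t : ℕ => log (4 * t + 2) / 2) t
      (by simp; positivity) (fun k _ => (hiter k).le) (fun k _ => ?_)
    have hcast : 4 * ((k + 1 : ℕ) : ℝ) + 2 = 4 * k + 6 := by push_cast; ring
    simpa only [hcast] using ratingStep_half_log_le k.cast_nonneg

theorem rating_half_log (σ : ℝ → ℝ)
    (hσ : ∀ z, σ z = 1 / (1 + Real.exp (-z)))
    (r : ℕ → ℝ) (hr0 : r 0 = 0) (hrec : ∀ t, r (t + 1) = r t + σ (-2 * r t)) :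
    ∃ C : ℝ, ∀ k : ℕ, 1 ≤ k → |r k - (1 / 2) * Real.log k| ≤ C := by
  have horbit : ∀ t, r t = ratingStep^[t] 0 := by
    intro t
    induction t with
    | zero => exact hr0
    | succ t ih => rw [hrec, hσ, Function.iterate_succ_apply', ← ih, ratingStep]; norm_num
  refine ⟨log 6 / 2, fun k hk => ?_⟩
  obtain ⟨hlo, hhi⟩ := ratingStep_iterate_zero_mem_Icc k
  have hk : (1 : ℝ) ≤ k := by exact_mod_cast hk
  have hlog_lo : log k ≤ log (k + 1) := log_le_log (by linarith) (by linarith)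
  have hlog_hi : log (4 * k + 2) ≤ log 6 + log k := by
    rw [← log_mul (by norm_num) (by linarith)]
    exact log_le_log (by linarith) (by linarith)
  rw [horbit, abs_le]
  constructor <;> linarith [log_nonneg (show (1 : ℝ) ≤ 6 by norm_num)]
end

section
/- Let σ : ℝ → ℝ be positive, strictly increasing, satisfy σ(z)+σ(-z)=1 and σ(2-2z) < 1/z for z > 0. Define r : ℕ → ℝ by r(0)=0, r(t+1)=r(t)+σ(-2r(t)), and f(x)=∫₀ˣ dτ/σ(-τ). Then for every positive integer a, the number of indices t with r(t) < a is at most f(2a+4)/2 and at least f(2a-4)/2. -/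
open intervalIntegral MeasureTheory

theorem rating_count_below (σ : ℝ → ℝ) (hcont : Continuous σ)
    (hpos : ∀ z, 0 < σ z) (hmono : StrictMono σ)
    (hsym : ∀ z, σ z + σ (-z) = 1)
    (htail : ∀ z : ℝ, 0 < z → σ (2 - 2 * z) < 1 / z)
    (r : ℕ → ℝ) (hr0 : r 0 = 0) (hrec : ∀ t, r (t + 1) = r t + σ (-2 * r t))
    (f : ℝ → ℝ) (hf : ∀ x, f x = ∫ τ in (0:ℝ)..x, 1 / σ (-τ)) :
    ∀ a : ℕ, 1 ≤ a →
      {t : ℕ | r t < (a : ℝ)}.Finite ∧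
      f (2 * a - 4) / 2 ≤ ({t : ℕ | r t < (a : ℝ)}.ncard : ℝ) ∧
      ({t : ℕ | r t < (a : ℝ)}.ncard : ℝ) ≤ f (2 * a + 4) / 2 := by
  classical
  have hσ1 : ∀ z, σ z < 1 := fun z => by
    have h1 := hsym z; have h2 := hpos (-z); linarith
  have hrmono : StrictMono r := strictMono_nat_of_lt_succ fun t => by
    have := hpos (-2 * r t); rw [hrec t]; linarith
  set G : ℝ → ℝ := fun s => 1 / σ (2 * (-s)) with hGdef
  have hGval : ∀ x : ℝ, G x = 1 / σ (-2 * x) := fun x => by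
    simp only [hGdef]; ring_nf
  have hGcont : Continuous G := by
    apply continuous_const.div
    · exact hcont.comp (by continuity)
    · exact fun x => (hpos _).ne'
  have hGpos : ∀ s, 0 < G s := fun s => by
    rw [hGval]; exact div_pos one_pos (hpos _)
  have hGmono : Monotone G := fun x y hxy => by
    rw [hGval, hGval]
    exact one_div_le_one_div_of_le (hpos _) (hmono.monotone (by linarith))
  have hint : ∀ x y : ℝ, IntervalIntegrable G volume x y :=
    fun x y => hGcont.intervalIntegrable x y
  set J : ℝ → ℝ := fun x => ∫ s in (0:ℝ)..x, G s with hJdef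
  have hJadd : ∀ x y : ℝ, J x + (∫ s in x..y, G s) = J y := fun x y =>
    integral_add_adjacent_intervals (hint 0 x) (hint x y)
  have hJmono : Monotone J := fun x y hxy => by
    have h1 := hJadd x y
    have h2 : 0 ≤ ∫ s in x..y, G s :=
      intervalIntegral.integral_nonneg hxy (fun u _ => (hGpos u).le)
    linarith
  have hfJ : ∀ y : ℝ, f (2 * y) = 2 * J y := by
    intro y
    rw [hf]
    have h := intervalIntegral.smul_integral_comp_mul_left
      (f := fun τ => 1 / σ (-τ)) (a := 0) (b := y) 2
    simp only [mul_zero, smul_eq_mul] at h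
    rw [← h, hJdef]
    congr 1
    apply intervalIntegral.integral_congr
    intro s _
    simp only [hGdef, neg_mul]
    ring_nf
  -- per-step bounds
  have hstep_up : ∀ t, (1:ℝ) ≤ ∫ s in r t..r (t+1), G s := by
    intro t
    have hle : r t ≤ r (t+1) := (hrmono (Nat.lt_succ_self t)).le
    have hc : (∫ s in r t..r (t+1), G (r t)) ≤ ∫ s in r t..r (t+1), G s := by
      apply intervalIntegral.integral_mono_on hle (intervalIntegrable_const) (hint _ _)
      exact fun s hs => hGmono hs.1
    rw [intervalIntegral.integral_const, smul_eq_mul] at hc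
    have hd : r (t+1) - r t = σ (-2 * r t) := by rw [hrec]; ring
    rw [hd, hGval, mul_one_div, div_self (hpos _).ne'] at hc
    exact hc
  have hstep_lo : ∀ t, (∫ s in (r t - 1)..(r (t+1) - 1), G s) ≤ 1 := by
    intro t
    have hσt := hpos (-2 * r t)
    have hσt1 := hσ1 (-2 * r t)
    have hle : r t - 1 ≤ r (t+1) - 1 := by
      have := hrmono (Nat.lt_succ_self t); linarith
    have hc : (∫ s in (r t - 1)..(r (t+1) - 1), G s)
        ≤ ∫ s in (r t - 1)..(r (t+1) - 1), G (r t) := by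
      apply intervalIntegral.integral_mono_on hle (hint _ _) (intervalIntegrable_const)
      intro s hs
      apply hGmono
      have h2 := hs.2
      have h3 : r (t+1) = r t + σ (-2 * r t) := hrec t
      linarith
    rw [intervalIntegral.integral_const, smul_eq_mul] at hc
    have hd : r (t+1) - 1 - (r t - 1) = σ (-2 * r t) := by rw [hrec]; ring
    rw [hd, hGval, mul_one_div, div_self (hpos _).ne'] at hc
    exact hc
  intro a ha
  have haR : (1:ℝ) ≤ (a:ℝ) := by exact_mod_cast ha
  -- existence of a time where r exceeds a
  have hex : ∃ t, (a:ℝ) ≤ r t := by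
    by_contra h
    push_neg at h
    set c := σ (-2 * (a:ℝ)) with hc
    have hcpos : 0 < c := hpos _
    have hlow : ∀ t : ℕ, (t:ℝ) * c ≤ r t := by
      intro t
      induction t with
      | zero => simp [hr0]
      | succ n ih =>
        rw [hrec]
        have h1 : c ≤ σ (-2 * r n) := by
          apply hmono.monotone
          have := h n; linarith
        push_cast
        linarith
    obtain ⟨n, hn⟩ := exists_nat_ge ((a:ℝ) / c)
    have h1 : (a:ℝ) ≤ (n:ℝ) * c := by
      rw [div_le_iff₀ hcpos] at hn; linarith
    exact absurd (le_trans h1 (hlow n)) (not_le.mpr (h n))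
  set T := Nat.find hex with hTdef
  have hT : (a:ℝ) ≤ r T := Nat.find_spec hex
  have hTlt : ∀ t, t < T → r t < a := fun t ht => not_le.mp (Nat.find_min hex ht)
  have hTpos : 0 < T := by
    rcases Nat.eq_zero_or_pos T with h | h
    · exfalso; rw [h, hr0] at hT; linarith
    · exact h
  have hset : {t : ℕ | r t < (a:ℝ)} = ↑(Finset.range T) := by
    ext t
    simp only [Set.mem_setOf_eq, Finset.coe_range, Set.mem_Iio]
    constructor
    · intro h
      by_contra hh
      push_neg at hh
      exact absurd (le_trans hT (hrmono.monotone hh)) (not_le.mpr h)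
    · exact hTlt t
  have hfin : {t : ℕ | r t < (a:ℝ)}.Finite := by
    rw [hset]; exact (Finset.range T).finite_toSet
  have hcard : {t : ℕ | r t < (a:ℝ)}.ncard = T := by
    rw [hset, Set.ncard_coe_finset, Finset.card_range]
  -- bound on r T
  have hrT_up : r T ≤ (a:ℝ) + 1 := by
    obtain ⟨S, hS⟩ := Nat.exists_eq_succ_of_ne_zero hTpos.ne'
    have hSlt : r S < a := hTlt S (by omega)
    have : r T = r S + σ (-2 * r S) := by rw [hS]; exact hrec S
    have := hσ1 (-2 * r S)
    linarith [hσ1 (-2 * r S), this]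
  -- sum bounds
  have hsum_up : (T:ℝ) ≤ J (r T) := by
    have hadj := intervalIntegral.sum_integral_adjacent_intervals
      (f := G) (a := r) (n := T) (fun k _ => hint _ _)
    calc (T:ℝ) = ∑ _k ∈ Finset.range T, (1:ℝ) := by simp
    _ ≤ ∑ k ∈ Finset.range T, ∫ s in r k..r (k+1), G s :=
        Finset.sum_le_sum fun k _ => hstep_up k
    _ = ∫ s in (r 0)..(r T), G s := hadj
    _ = J (r T) := by rw [hr0]
  have hsum_lo : J (r T - 1) ≤ (T:ℝ) := by
    have hadj := intervalIntegral.sum_integral_adjacent_intervals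
      (f := G) (a := fun k => r k - 1) (n := T) (fun k _ => hint _ _)
    have h1 : (∫ s in (r 0 - 1)..(r T - 1), G s) ≤ (T:ℝ) := by
      rw [← hadj]
      calc (∑ k ∈ Finset.range T, ∫ s in (r k - 1)..(r (k+1) - 1), G s)
          ≤ ∑ _k ∈ Finset.range T, (1:ℝ) := Finset.sum_le_sum fun k _ => hstep_lo k
      _ = (T:ℝ) := by simp
    have h2 : J (r T - 1) ≤ ∫ s in (r 0 - 1)..(r T - 1), G s := by
      have hadd := integral_add_adjacent_intervals (μ := volume)
        (hint (r 0 - 1) 0) (hint 0 (r T - 1))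
      have hn : 0 ≤ ∫ s in (r 0 - 1)..(0:ℝ), G s :=
        intervalIntegral.integral_nonneg (by rw [hr0]; norm_num)
          (fun u _ => (hGpos u).le)
      have : J (r T - 1) = ∫ s in (0:ℝ)..(r T - 1), G s := rfl
      linarith
    linarith
  refine ⟨hfin, ?_, ?_⟩
  · rw [hcard]
    have e1 : 2 * (a:ℝ) - 4 = 2 * ((a:ℝ) - 2) := by ring
    rw [e1, hfJ]
    have h1 : J ((a:ℝ) - 2) ≤ J (r T - 1) := hJmono (by linarith)
    linarith
  · rw [hcard]
    have e1 : 2 * (a:ℝ) + 4 = 2 * ((a:ℝ) + 2) := by ring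
    rw [e1, hfJ]
    have h1 : J (r T) ≤ J ((a:ℝ) + 2) := hJmono (by linarith)
    linarith
end

section
/- Let s₁ ≥ s₂ ≥ … ≥ s_n be reals with s_n ≤ 0 and s₁ = s_max > 0, and let f be convex increasing on [0,∞) with f(0)=0. Define Φ = Σᵢ sᵢ² + Σ_{i=1}^{n-1} f(s_i - s_{i+1}). Then for every integer m ≥ 1 there exists a bound Φ ≥ min over m of [m (s_max/2)² + m f(s_max/(2m))]; in particular Φ ≥ inf_{m ∈ ℕ, m ≥ 1} ( m s_max²/4 + m f(s_max/(2m)) ). -/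
/-!
Let `m` be the length of the maximal initial block of entries `≥ s₁ / 2`; it is a proper block
since `s_n ≤ 0`. Its entries contribute at least `m (s₁ / 2)²` to `∑ sᵢ²`, and the `m` gaps
`sᵢ - sᵢ₊₁` leaving it are nonnegative with total at least `s₁ / 2`, so by Jensen's inequality
they contribute at least `m f (s₁ / (2m))`.
-/

open Finset

lemma ConvexOn.card_mul_map_sum_div_card_le {ι : Type*} {D : Set ℝ} {f : ℝ → ℝ}
    (hf : ConvexOn ℝ D f) {t : Finset ι} (ht : t.Nonempty) {p : ι → ℝ} (hp : ∀ i ∈ t, p i ∈ D) :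
    #t * f ((∑ i ∈ t, p i) / #t) ≤ ∑ i ∈ t, f (p i) := by
  have hcard : (0 : ℝ) < #t := by exact_mod_cast ht.card_pos
  have hweights : ∑ _i ∈ t, (#t : ℝ)⁻¹ = 1 := by
    rw [sum_const, nsmul_eq_mul, mul_inv_cancel₀ hcard.ne']
  have := hf.map_sum_le (fun _ _ ↦ inv_nonneg.2 hcard.le) hweights hp
  simp only [smul_eq_mul, ← mul_sum] at this
  rw [div_eq_inv_mul]
  calc #t * f ((#t : ℝ)⁻¹ * ∑ i ∈ t, p i)
      ≤ #t * ((#t : ℝ)⁻¹ * ∑ i ∈ t, f (p i)) := by gcongr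
    _ = ∑ i ∈ t, f (p i) := by field_simp

lemma sum_Icc_one_sub_succ (s : ℕ → ℝ) (m : ℕ) :
    ∑ i ∈ Icc 1 m, (s i - s (i + 1)) = s 1 - s (m + 1) := by
  rcases Nat.eq_zero_or_pos m with rfl | hm
  · simp
  · rw [← neg_sub, ← sum_Icc_sub hm, ← sum_neg_distrib]
    simp only [neg_sub]

lemma exists_prefix_ge_of_lt {s : ℕ → ℝ} {t : ℝ} {n : ℕ} (hn : 1 ≤ n) (h1 : t ≤ s 1)
    (hlt : s n < t) :
    ∃ m, 1 ≤ m ∧ m + 1 ≤ n ∧ (∀ i ∈ Icc 1 m, t ≤ s i) ∧ s (m + 1) < t := by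
  classical
  have hex : ∃ k, s (k + 1) < t := ⟨n - 1, by rwa [Nat.sub_add_cancel hn]⟩
  refine ⟨Nat.find hex, (Nat.find_pos hex).2 (by simpa using h1),
    ?_, fun i hi ↦ ?_, Nat.find_spec hex⟩
  · have := Nat.find_min' hex (m := n - 1) (by rwa [Nat.sub_add_cancel hn])
    omega
  · obtain ⟨hi1, him⟩ := mem_Icc.1 hi
    have := Nat.find_min hex (m := i - 1) (by omega)
    rwa [Nat.sub_add_cancel hi1, not_lt] at this

lemma mul_sq_le_sum_sq {s : ℕ → ℝ} {t : ℝ} {m n : ℕ} (ht : 0 ≤ t) (hmn : m ≤ n)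
    (hs : ∀ i ∈ Icc 1 m, t ≤ s i) :
    m * t ^ 2 ≤ ∑ i ∈ Icc 1 n, s i ^ 2 :=
  calc (m : ℝ) * t ^ 2 = ∑ _i ∈ Icc 1 m, t ^ 2 := by simp
    _ ≤ ∑ i ∈ Icc 1 m, s i ^ 2 := sum_le_sum fun i hi ↦ by gcongr; exact hs i hi
    _ ≤ ∑ i ∈ Icc 1 n, s i ^ 2 :=
      sum_le_sum_of_subset_of_nonneg (Icc_subset_Icc_right hmn) fun i _ _ ↦ sq_nonneg _

lemma mul_map_div_le_sum_map_sub_succ {s : ℕ → ℝ} {f : ℝ → ℝ} {m : ℕ} {δ : ℝ}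
    (hconv : ConvexOn ℝ (Set.Ici 0) f) (hmono : MonotoneOn f (Set.Ici 0)) (hm : 1 ≤ m)
    (hs : ∀ i ∈ Icc 1 m, s (i + 1) ≤ s i) (hδ : 0 ≤ δ) (hdrop : δ ≤ s 1 - s (m + 1)) :
    m * f (δ / m) ≤ ∑ i ∈ Icc 1 m, f (s i - s (i + 1)) := by
  have hm' : (0 : ℝ) < m := by exact_mod_cast hm
  have hgaps : ∀ i ∈ Icc 1 m, s i - s (i + 1) ∈ Set.Ici (0 : ℝ) := fun i hi ↦
    Set.mem_Ici.2 (sub_nonneg.2 (hs i hi))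
  have hjensen := hconv.card_mul_map_sum_div_card_le (nonempty_Icc.2 hm) hgaps
  rw [sum_Icc_one_sub_succ, Nat.card_Icc, Nat.add_sub_cancel] at hjensen
  calc (m : ℝ) * f (δ / m) ≤ m * f ((s 1 - s (m + 1)) / m) := by
        gcongr
        exact hmono (div_nonneg hδ hm'.le) (div_nonneg (hδ.trans hdrop) hm'.le)
          (by gcongr)
    _ ≤ _ := hjensen

theorem phi_lower_bound_core (n : ℕ) (hn : 2 ≤ n) (s : ℕ → ℝ)
    (hsorted : ∀ i : ℕ, 1 ≤ i → i + 1 ≤ n → s (i + 1) ≤ s i)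
    (hlast : s n ≤ 0) (hmax : 0 < s 1)
    (f : ℝ → ℝ) (hconv : ConvexOn ℝ (Set.Ici 0) f)
    (hmono : MonotoneOn f (Set.Ici 0)) (hf0 : f 0 = 0)
    (Φ : ℝ)
    (hΦ : Φ = ∑ i ∈ Finset.Icc 1 n, (s i) ^ 2 + ∑ i ∈ Finset.Icc 1 (n - 1), f (s i - s (i + 1))) :
    Φ ≥ sInf {x : ℝ | ∃ m : ℕ, 1 ≤ m ∧
      x = (m : ℝ) * (s 1) ^ 2 / 4 + (m : ℝ) * f (s 1 / (2 * m))} := by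
  have hf_nonneg : ∀ x, 0 ≤ x → 0 ≤ f x := fun x hx ↦
    hf0 ▸ hmono (Set.mem_Ici.2 le_rfl) hx hx
  obtain ⟨m, hm, hmn, hprefix, hdrop⟩ :=
    exists_prefix_ge_of_lt (s := s) (t := s 1 / 2) (by omega : 1 ≤ n) (by linarith)
      (by linarith)
  have hsq : m * (s 1 / 2) ^ 2 ≤ ∑ i ∈ Icc 1 n, s i ^ 2 :=
    mul_sq_le_sum_sq (by positivity) (by omega) hprefix
  have hgaps : m * f (s 1 / 2 / m) ≤ ∑ i ∈ Icc 1 (n - 1), f (s i - s (i + 1)) :=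
    calc (m : ℝ) * f (s 1 / 2 / m) ≤ ∑ i ∈ Icc 1 m, f (s i - s (i + 1)) :=
          mul_map_div_le_sum_map_sub_succ hconv hmono hm
            (fun i hi ↦ hsorted i (mem_Icc.1 hi).1 (by grind)) (by positivity) (by linarith)
      _ ≤ ∑ i ∈ Icc 1 (n - 1), f (s i - s (i + 1)) :=
          sum_le_sum_of_subset_of_nonneg (Icc_subset_Icc_right (by omega)) fun i hi _ ↦
            hf_nonneg _ (sub_nonneg.2 (hsorted i (mem_Icc.1 hi).1 (by grind)))
  have hbdd : BddBelow {x : ℝ | ∃ m : ℕ, 1 ≤ m ∧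
      x = (m : ℝ) * (s 1) ^ 2 / 4 + (m : ℝ) * f (s 1 / (2 * m))} := by
    refine ⟨0, ?_⟩
    rintro x ⟨k, -, rfl⟩
    exact add_nonneg (by positivity) (mul_nonneg k.cast_nonneg (hf_nonneg _ (by positivity)))
  calc sInf _ ≤ (m : ℝ) * (s 1) ^ 2 / 4 + (m : ℝ) * f (s 1 / (2 * m)) :=
        csInf_le hbdd ⟨m, hm, rfl⟩
    _ ≤ Φ := by
      rw [hΦ, ← div_div]
      linarith
end
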